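/- Let w ∈ A_∞ on ℝⁿ. Then the logarithmic A_∞ constant satisfies [w]_{A_∞}^{log} − 1 ≤ 2ⁿ ([w]_{A_∞} − 1), where [w]_{A_∞}^{log} = sup_Q (1/w(Q)) ∫_Q (1 + log⁺(w/w_Q)) w dx and [w]_{A_∞} = sup_Q (1/w(Q)) ∫_Q M(wχ_Q) dx. -/

import Mathlib

open MeasureTheory Real

noncomputable section

/-- `Rn n` is Euclidean space `ℝⁿ` with the sup metric, so that closed balls are cubes. -/
abbrev Rn (n : ℕ) := Fin n → ℝ

/-- An (axis-parallel, closed) cube in `ℝⁿ`: a closed ball for the sup metric with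
positive radius. -/
def IsCube {n : ℕ} (Q : Set (Rn n)) : Prop :=
  ∃ (c : Rn n) (r : ℝ), 0 < r ∧ Q = Metric.closedBall c r

/-- Lebesgue measure `|Q|` as a real number. -/
def vol {n : ℕ} (Q : Set (Rn n)) : ℝ := (volume Q).toReal

/-- `w(Q) = ∫_Q w`. -/
def intOn {n : ℕ} (w : Rn n → ℝ) (Q : Set (Rn n)) : ℝ := ∫ x in Q, w x

/-- Lebesgue average `(1/|Q|) ∫_Q f`. -/
def avgOn {n : ℕ} (Q : Set (Rn n)) (f : Rn n → ℝ) : ℝ := (vol Q)⁻¹ * ∫ x in Q, f x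

/-- Weighted average `f_{Q,w} = (1/w(Q)) ∫_Q f w`. -/
def wavgOn {n : ℕ} (w : Rn n → ℝ) (Q : Set (Rn n)) (f : Rn n → ℝ) : ℝ :=
  (intOn w Q)⁻¹ * ∫ x in Q, f x * w x

/-- Hardy–Littlewood maximal function over cubes. -/
def maximalFn {n : ℕ} (f : Rn n → ℝ) (x : Rn n) : ℝ :=
  sSup {a | ∃ Q : Set (Rn n), IsCube Q ∧ x ∈ Q ∧ a = avgOn Q (fun y => |f y|)}

/-- The set of ratios defining the Fujii–Wilson `A_∞` constant. -/
def fwSet {n : ℕ} (w : Rn n → ℝ) : Set ℝ :=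
  {a | ∃ Q : Set (Rn n), IsCube Q ∧
    a = (intOn w Q)⁻¹ * ∫ x in Q, maximalFn (Q.indicator w) x}

/-- Fujii–Wilson constant `[w]_{A_∞} = sup_Q (1/w(Q)) ∫_Q M(w χ_Q)`. -/
def fujiiWilson {n : ℕ} (w : Rn n → ℝ) : ℝ := sSup (fwSet w)

open Classical in
/-- The `A_p` ratio of `w` on the cube `Q`:
`((1/|Q|)∫_Q w)((1/|Q|)∫_Q w^{1-p'})^{p-1}` for `p > 1` (note `1 - p' = -1/(p-1)`),
with the ess-sup convention for `p = 1`. -/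
def apRatio {n : ℕ} (p : ℝ) (w : Rn n → ℝ) (Q : Set (Rn n)) : ℝ :=
  if p = 1 then
    avgOn Q w * essSup (fun x => (w x)⁻¹) (volume.restrict Q)
  else
    avgOn Q w * (avgOn Q (fun x => w x ^ (-(p - 1)⁻¹))) ^ (p - 1)

/-- The set of `A_p` ratios of `w` over all cubes. -/
def apSet {n : ℕ} (p : ℝ) (w : Rn n → ℝ) : Set ℝ :=
  {a | ∃ Q : Set (Rn n), IsCube Q ∧ a = apRatio p w Q}

/-- The Muckenhoupt `A_p` constant `[w]_{A_p}`. -/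
def apConst {n : ℕ} (p : ℝ) (w : Rn n → ℝ) : ℝ := sSup (apSet p w)

/-- The set of ratios defining the Hruščev `A_∞` constant. -/
def hruscevSet {n : ℕ} (w : Rn n → ℝ) : Set ℝ :=
  {a | ∃ Q : Set (Rn n), IsCube Q ∧
    a = avgOn Q w * Real.exp (avgOn Q (fun x => Real.log (w x)⁻¹))}

/-- Hruščev constant `[w]'_{A_∞} = sup_Q ((1/|Q|)∫_Q w) exp((1/|Q|)∫_Q log w⁻¹)`. -/
def hruscev {n : ℕ} (w : Rn n → ℝ) : ℝ := sSup (hruscevSet w)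

/-- The set of ratios defining the logarithmic `A_∞` constant. -/
def logAinfSet {n : ℕ} (w : Rn n → ℝ) : Set ℝ :=
  {a | ∃ Q : Set (Rn n), IsCube Q ∧
    a = (intOn w Q)⁻¹ * ∫ x in Q, (1 + max (Real.log (w x / avgOn Q w)) 0) * w x}

/-- Logarithmic `A_∞` constant
`[w]_{A_∞}^{log} = sup_Q (1/w(Q)) ∫_Q (1 + log⁺(w/w_Q)) w`. -/
def logAinf {n : ℕ} (w : Rn n → ℝ) : ℝ := sSup (logAinfSet w)

/-- The set of mean oscillations of `f` over cubes. -/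
def bmoSet {n : ℕ} (f : Rn n → ℝ) : Set ℝ :=
  {a | ∃ Q : Set (Rn n), IsCube Q ∧ a = avgOn Q (fun x => |f x - avgOn Q f|)}

/-- The `BMO` seminorm `‖f‖_{BMO} = sup_Q (1/|Q|) ∫_Q |f - f_Q|`. -/
def bmoNorm {n : ℕ} (f : Rn n → ℝ) : ℝ := sSup (bmoSet f)

/-- The set of weighted mean oscillations of `f` over cubes. -/
def bmoWSet {n : ℕ} (w f : Rn n → ℝ) : Set ℝ :=
  {a | ∃ Q : Set (Rn n), IsCube Q ∧
    a = (intOn w Q)⁻¹ * ∫ x in Q, |f x - wavgOn w Q f| * w x}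

/-- The weighted `BMO` seminorm `‖f‖_{BMO_w} = sup_Q (1/w(Q)) ∫_Q |f - f_{Q,w}| w`. -/
def bmoWNorm {n : ℕ} (w f : Rn n → ℝ) : ℝ := sSup (bmoWSet w f)


/-!
Fix a cube `Q` and `ℓ = w_Q`. By the layer-cake formula,
`∫_Q log⁺(w/ℓ) w = ∫_ℓ^∞ w(Q ∩ {w > s}) ds/s` and
`∫_Q (M(wχ_Q) - ℓ) = ∫_ℓ^∞ |Q ∩ {M(wχ_Q) > s}| ds`,
the latter because `M(wχ_Q) ≥ ℓ` on `Q`. For `s > ℓ`, the Calderón–Zygmund stopping time on the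
dyadic subcubes of `Q` gives `w(Q ∩ {w > s}) ≤ 2ⁿ s |Q ∩ {M(wχ_Q) > s}|`: the maximal dyadic cubes
with average above `s` cover `{w > s}` up to a null set (Lebesgue differentiation), lie in
`{M(wχ_Q) > s}`, and carry averages at most `2ⁿ s` because their parents did not stop. Hence
`∫_Q (1 + log⁺(w/ℓ)) w ≤ w(Q) + 2ⁿ (∫_Q M(wχ_Q) - w(Q))`; divide by `w(Q)` and take suprema.
-/

open Set Filter Metric Topology
open scoped ENNReal NNReal

section

variable {n : ℕ}

theorem volume_closedBall_eq (x : Rn n) {ρ : ℝ} (hρ : 0 ≤ ρ) :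
    volume (closedBall x ρ) = ENNReal.ofReal ((2 * ρ) ^ n) := by
  simpa using Real.volume_pi_closedBall x hρ

theorem closedBall_eq_pi_Icc (x : Rn n) {ρ : ℝ} (hρ : 0 ≤ ρ) :
    closedBall x ρ = univ.pi fun i => Icc (x i - ρ) (x i + ρ) := by
  rw [closedBall_pi x hρ]
  simp [Real.closedBall_eq_Icc]

theorem setAverage_eq_avgOn (Q : Set (Rn n)) (f : Rn n → ℝ) : ⨍ x in Q, f x = avgOn Q f := by
  rw [setAverage_eq, measureReal_def, smul_eq_mul]
  rfl

theorem avgOn_le_iff {Q : Set (Rn n)} {f : Rn n → ℝ} {t : ℝ} (hQ : 0 < vol Q) :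
    avgOn Q f ≤ t ↔ ∫ x in Q, f x ≤ t * vol Q := by
  rw [avgOn, inv_mul_le_iff₀ hQ, mul_comm]

theorem avgOn_abs_indicator {Q P : Set (Rn n)} {w : Rn n → ℝ} (hw0 : ∀ x, 0 ≤ w x)
    (hP : MeasurableSet P) (hPQ : P ⊆ Q) :
    avgOn P (fun y => |Q.indicator w y|) = avgOn P w := by
  unfold avgOn
  congr 1
  refine setIntegral_congr_fun hP fun y hy => ?_
  rw [indicator_of_mem (hPQ hy), abs_of_nonneg (hw0 y)]

namespace IsCube

variable {Q : Set (Rn n)}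

theorem measurableSet (hQ : IsCube Q) : MeasurableSet Q := by
  obtain ⟨c, r, -, rfl⟩ := hQ
  exact measurableSet_closedBall

theorem isCompact (hQ : IsCube Q) : IsCompact Q := by
  obtain ⟨c, r, -, rfl⟩ := hQ
  exact isCompact_closedBall c r

theorem volume_ne_top (hQ : IsCube Q) : volume Q ≠ ∞ :=
  hQ.isCompact.measure_ne_top

theorem vol_pos (hQ : IsCube Q) : 0 < vol Q := by
  obtain ⟨c, r, hr, rfl⟩ := hQ
  rw [vol, volume_closedBall_eq c hr.le, ENNReal.toReal_ofReal (by positivity)]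
  positivity

theorem integrable_indicator (hQ : IsCube Q) {w : Rn n → ℝ} (hwl : LocallyIntegrable w volume) :
    Integrable (Q.indicator w) :=
  (integrable_indicator_iff hQ.measurableSet).2 (hwl.integrableOn_isCompact hQ.isCompact)

theorem vol_mul_avgOn (hQ : IsCube Q) (f : Rn n → ℝ) : vol Q * avgOn Q f = ∫ x in Q, f x := by
  rw [avgOn, mul_inv_cancel_left₀ hQ.vol_pos.ne']

end IsCube

theorem volume_closedBall_three_mul_le (x z : Rn n) {ρ ρ' : ℝ} (hρ' : 0 ≤ ρ')
    (h : ρ' ≤ 2 * ρ) :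
    volume (closedBall x (3 * ρ')) ≤ ((6 : ℝ≥0) ^ n : ℝ≥0) * volume (closedBall z ρ) := by
  rw [volume_closedBall_eq x (by positivity), volume_closedBall_eq z (by linarith),
    ENNReal.coe_pow, show ((6 : ℝ≥0) : ℝ≥0∞) = ENNReal.ofReal 6 by simp,
    ← ENNReal.ofReal_pow (by norm_num), ← ENNReal.ofReal_mul (by positivity), ← mul_pow]
  exact ENNReal.ofReal_le_ofReal (pow_le_pow_left₀ (by positivity) (by linarith) n)

/-- A Vitali family containing, at each point, every cube through that point. -/
def cubeVitaliFamily (n : ℕ) : VitaliFamily (volume : Measure (Rn n)) :=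
  Vitali.vitaliFamily volume ((6 : ℝ≥0) ^ n) fun x =>
    ((eventually_mem_nhdsWithin (a := (0 : ℝ)) (s := Ioi 0)).mono fun ρ (hρ : 0 < ρ) =>
      volume_closedBall_three_mul_le x x hρ.le (by linarith)).frequently

theorem closedBall_mem_cubeVitaliFamily {x z : Rn n} {ρ : ℝ} (hρ : 0 < ρ)
    (hx : x ∈ closedBall z ρ) : closedBall z ρ ∈ (cubeVitaliFamily n).setsAt x := by
  refine ⟨isClosed_closedBall, (nonempty_ball.2 hρ).mono ball_subset_interior_closedBall,
    2 * ρ, closedBall_subset_closedBall' ?_,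
    volume_closedBall_three_mul_le x z (by positivity) le_rfl⟩
  rw [dist_comm]
  linarith [mem_closedBall.1 hx]

def cubeAverages (f : Rn n → ℝ) (x : Rn n) : Set ℝ :=
  {a | ∃ Q : Set (Rn n), IsCube Q ∧ x ∈ Q ∧ a = avgOn Q fun y => |f y|}

theorem avgOn_le_maximalFn {f : Rn n → ℝ} {x : Rn n} (hB : BddAbove (cubeAverages f x))
    {Q : Set (Rn n)} (hQ : IsCube Q) (hx : x ∈ Q) :
    avgOn Q (fun y => |f y|) ≤ maximalFn f x :=
  le_csSup hB ⟨Q, hQ, hx, rfl⟩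

theorem avgOn_closedBall_abs_le {f : Rn n → ℝ} (hf : Integrable f) (z : Rn n) {ε ρ : ℝ}
    (hε : 0 < ε) (h : ε ≤ 2 * ρ) :
    avgOn (closedBall z ρ) (fun y => |f y|) ≤ (ε ^ n)⁻¹ * ∫ y, |f y| := by
  have hρ : 0 ≤ ρ := by linarith
  have hvol : vol (closedBall z ρ) = (2 * ρ) ^ n := by
    rw [vol, volume_closedBall_eq z hρ, ENNReal.toReal_ofReal (by positivity)]
  rw [avgOn, hvol]
  exact mul_le_mul (inv_anti₀ (by positivity) (pow_le_pow_left₀ hε.le h n))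
    (setIntegral_le_integral hf.abs (.of_forall fun y => abs_nonneg _))
    (setIntegral_nonneg measurableSet_closedBall fun y _ => abs_nonneg _) (by positivity)

/-- `maximalFn` is an `sSup`, so it dominates the cube averages only where they are bounded.
Small cubes are controlled by Lebesgue differentiation, large ones by `‖f‖₁`. -/
theorem ae_bddAbove_cubeAverages {f : Rn n → ℝ} (hf : Integrable f) :
    ∀ᵐ x, BddAbove (cubeAverages f x) := by
  filter_upwards [(cubeVitaliFamily n).ae_tendsto_average hf.abs.locallyIntegrable] with x hx
  obtain ⟨ε, hε, hsmall⟩ := (cubeVitaliFamily n).eventually_filterAt_iff.1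
    (hx.eventually (eventually_le_nhds (lt_add_one |f x|)))
  refine ⟨max (|f x| + 1) ((ε ^ n)⁻¹ * ∫ y, |f y|), ?_⟩
  rintro _ ⟨_, ⟨z, ρ, hρ, rfl⟩, hxQ, rfl⟩
  rcases le_or_gt ρ (ε / 2) with hρε | hρε
  · refine le_max_of_le_left ?_
    rw [← setAverage_eq_avgOn]
    refine hsmall _ (closedBall_mem_cubeVitaliFamily hρ hxQ) (closedBall_subset_closedBall' ?_)
    rw [dist_comm]
    linarith [mem_closedBall.1 hxQ]
  · exact le_max_of_le_right (avgOn_closedBall_abs_le hf z hε (by linarith))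

theorem ae_avgOn_le_maximalFn_indicator {Q : Set (Rn n)} (hQ : IsCube Q) {w : Rn n → ℝ}
    (hw0 : ∀ x, 0 ≤ w x) (hwl : LocallyIntegrable w volume) :
    ∀ᵐ x ∂volume.restrict Q, avgOn Q w ≤ maximalFn (Q.indicator w) x := by
  rw [ae_restrict_iff' hQ.measurableSet]
  filter_upwards [ae_bddAbove_cubeAverages (hQ.integrable_indicator hwl)] with x hB hx
  rw [← avgOn_abs_indicator hw0 hQ.measurableSet subset_rfl]
  exact avgOn_le_maximalFn hB hQ hx

theorem maximalFn_nonneg (f : Rn n → ℝ) (x : Rn n) : 0 ≤ maximalFn f x :=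
  Real.sSup_nonneg fun _ ⟨_, _, _, ha⟩ => ha ▸
    mul_nonneg (inv_nonneg.2 ENNReal.toReal_nonneg) (integral_nonneg fun _ => abs_nonneg _)

section Dyadic

variable (c : Rn n) (r : ℝ)

/-- The index of the level-`k` dyadic subcube of `closedBall c r` (side `2 r / 2 ^ k`)
containing `x`. -/
def dyadicIndex (k : ℕ) (x : Rn n) : Fin n → ℤ :=
  fun i => ⌊2 ^ k * (x i - c i + r) / (2 * r)⌋

def dyadicCube (k : ℕ) (m : Fin n → ℤ) : Set (Rn n) :=
  {x | dyadicIndex c r k x = m}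

def closedDyadicCube (k : ℕ) (m : Fin n → ℤ) : Set (Rn n) :=
  closedBall (fun i => c i - r + 2 * r * (m i + 1 / 2) / 2 ^ k) (r / 2 ^ k)

variable {c r}

theorem dyadicIndex_of_le {j k : ℕ} (hjk : j ≤ k) (x : Rn n) :
    dyadicIndex c r j x = fun i => dyadicIndex c r k x i / 2 ^ (k - j) := by
  funext i
  have h2 : (2 : ℝ) ^ k = 2 ^ j * 2 ^ (k - j) := by rw [← pow_add, Nat.add_sub_cancel' hjk]
  have := Int.floor_div_natCast (2 ^ k * (x i - c i + r) / (2 * r)) (2 ^ (k - j))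
  push_cast at this
  rw [dyadicIndex, dyadicIndex, ← this, h2]
  congr 1
  field_simp

theorem dyadicIndex_eq_of_le {j k : ℕ} (hjk : j ≤ k) {x y : Rn n}
    (h : dyadicIndex c r k y = dyadicIndex c r k x) :
    dyadicIndex c r j y = dyadicIndex c r j x := by
  rw [dyadicIndex_of_le hjk, dyadicIndex_of_le hjk, h]

theorem dyadicCube_dyadicIndex_subset {j k : ℕ} (hjk : j ≤ k) (x : Rn n) :
    dyadicCube c r k (dyadicIndex c r k x) ⊆ dyadicCube c r j (dyadicIndex c r j x) :=
  fun _ hy => dyadicIndex_eq_of_le hjk hy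

theorem closedDyadicCube_zero : closedDyadicCube c r 0 0 = closedBall c r := by
  rw [closedDyadicCube]
  congr 1
  · funext i
    simp only [Pi.zero_apply, Int.cast_zero, zero_add, pow_zero, div_one]
    ring
  · simp

theorem closedDyadicCube_subset_closedBall {k : ℕ} {m : Fin n → ℤ} {x : Rn n}
    (hx : x ∈ closedDyadicCube c r k m) :
    closedDyadicCube c r k m ⊆ closedBall x (2 * r / 2 ^ k) := by
  refine closedBall_subset_closedBall' ?_
  rw [dist_comm, mul_div_assoc]
  linarith [mem_closedBall.1 hx]

variable (hr : 0 < r)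
include hr

theorem dyadicCube_eq_pi (k : ℕ) (m : Fin n → ℤ) :
    dyadicCube c r k m = univ.pi fun i =>
      Ico (c i - r + 2 * r * m i / 2 ^ k) (c i - r + 2 * r * (m i + 1) / 2 ^ k) := by
  ext x
  simp only [dyadicCube, dyadicIndex, mem_ofPred_eq, funext_iff, Set.mem_pi, mem_univ,
    true_implies, mem_Ico]
  refine forall_congr' fun i => Int.floor_eq_iff.trans ?_
  have hφ : StrictMono fun a : ℝ => c i - r + 2 * r * a / 2 ^ k := fun a b hab => by
    dsimp only
    gcongr
  have hx : c i - r + 2 * r * (2 ^ k * (x i - c i + r) / (2 * r)) / 2 ^ k = x i := by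
    field_simp
    ring
  rw [← hφ.le_iff_le, ← hφ.lt_iff_lt, hx]

theorem closedDyadicCube_eq_pi (k : ℕ) (m : Fin n → ℤ) :
    closedDyadicCube c r k m = univ.pi fun i =>
      Icc (c i - r + 2 * r * m i / 2 ^ k) (c i - r + 2 * r * (m i + 1) / 2 ^ k) := by
  rw [closedDyadicCube, closedBall_eq_pi_Icc _ (by positivity)]
  congr! 3 with i <;> ring

theorem closure_dyadicCube (k : ℕ) (m : Fin n → ℤ) :
    closure (dyadicCube c r k m) = closedDyadicCube c r k m := by
  rw [dyadicCube_eq_pi hr, closure_pi_set, closedDyadicCube_eq_pi hr]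
  congr! 2 with i
  exact closure_Ico (ne_of_lt (by gcongr; linarith))

theorem isCube_closedDyadicCube (k : ℕ) (m : Fin n → ℤ) : IsCube (closedDyadicCube c r k m) :=
  ⟨_, _, by positivity, rfl⟩

theorem dyadicCube_subset_closedDyadicCube (k : ℕ) (m : Fin n → ℤ) :
    dyadicCube c r k m ⊆ closedDyadicCube c r k m :=
  closure_dyadicCube hr k m ▸ subset_closure

theorem dyadicCube_zero_subset : dyadicCube c r 0 0 ⊆ closedBall c r :=
  closedDyadicCube_zero (c := c) (r := r) ▸ dyadicCube_subset_closedDyadicCube hr 0 0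

theorem closedDyadicCube_dyadicIndex_subset {x : Rn n} (hx : dyadicIndex c r 0 x = 0) (k : ℕ) :
    closedDyadicCube c r k (dyadicIndex c r k x) ⊆ closedBall c r := by
  rw [← closure_dyadicCube hr, ← closedDyadicCube_zero, ← closure_dyadicCube hr, ← hx]
  exact closure_mono (dyadicCube_dyadicIndex_subset (Nat.zero_le k) x)

theorem measurableSet_dyadicCube (k : ℕ) (m : Fin n → ℤ) :
    MeasurableSet (dyadicCube c r k m) := by
  rw [dyadicCube_eq_pi hr]
  exact .univ_pi fun _ => measurableSet_Ico

theorem volume_dyadicCube (k : ℕ) (m : Fin n → ℤ) :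
    volume (dyadicCube c r k m) = ENNReal.ofReal ((2 * r / 2 ^ k) ^ n) := by
  rw [dyadicCube_eq_pi hr, Real.volume_pi_Ico, ENNReal.ofReal_pow (by positivity)]
  have hside : ∀ i, c i - r + 2 * r * (m i + 1) / 2 ^ k - (c i - r + 2 * r * m i / 2 ^ k)
      = 2 * r / 2 ^ k := fun i => by ring
  simp [hside]

theorem volume_closedDyadicCube (k : ℕ) (m : Fin n → ℤ) :
    volume (closedDyadicCube c r k m) = ENNReal.ofReal ((2 * r / 2 ^ k) ^ n) := by
  rw [closedDyadicCube, volume_closedBall_eq _ (by positivity), mul_div_assoc]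

theorem volume_dyadicCube_eq_two_pow_mul (k : ℕ) (m m' : Fin n → ℤ) :
    volume (dyadicCube c r k m) = 2 ^ n * volume (dyadicCube c r (k + 1) m') := by
  rw [volume_dyadicCube hr, volume_dyadicCube hr, ← ENNReal.ofReal_ofNat 2,
    ← ENNReal.ofReal_pow (by norm_num), ← ENNReal.ofReal_mul (by positivity), ← mul_pow]
  congr 2
  field_simp
  ring

theorem dyadicCube_ae_eq (k : ℕ) (m : Fin n → ℤ) :
    dyadicCube c r k m =ᵐ[volume] closedDyadicCube c r k m :=
  ae_eq_of_subset_of_measure_ge (dyadicCube_subset_closedDyadicCube hr k m)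
    (by rw [volume_dyadicCube hr, volume_closedDyadicCube hr])
    (measurableSet_dyadicCube hr k m).nullMeasurableSet
    (by rw [volume_closedDyadicCube hr]; exact ENNReal.ofReal_ne_top)

theorem avgOn_closedDyadicCube (k : ℕ) (m : Fin n → ℤ) (f : Rn n → ℝ) :
    avgOn (closedDyadicCube c r k m) f = avgOn (dyadicCube c r k m) f := by
  rw [avgOn, avgOn, vol, vol, measure_congr (dyadicCube_ae_eq hr k m),
    setIntegral_congr_set (dyadicCube_ae_eq hr k m)]

theorem vol_dyadicCube_pos (k : ℕ) (m : Fin n → ℤ) : 0 < vol (dyadicCube c r k m) := by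
  rw [vol, volume_dyadicCube hr, ENNReal.toReal_ofReal (by positivity)]
  positivity

theorem integrableOn_dyadicCube {w : Rn n → ℝ} (hwl : LocallyIntegrable w volume) (k : ℕ)
    (m : Fin n → ℤ) : IntegrableOn w (dyadicCube c r k m) :=
  (hwl.integrableOn_isCompact (isCube_closedDyadicCube hr k m).isCompact).mono_set
    (dyadicCube_subset_closedDyadicCube hr k m)

theorem ae_tendsto_avgOn_dyadicCube {w : Rn n → ℝ} (hwl : LocallyIntegrable w volume) :
    ∀ᵐ x, Tendsto (fun k => avgOn (dyadicCube c r k (dyadicIndex c r k x)) w) atTop (𝓝 (w x)) := by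
  filter_upwards [(cubeVitaliFamily n).ae_tendsto_average hwl] with x hx
  have hmem : ∀ k, x ∈ closedDyadicCube c r k (dyadicIndex c r k x) := fun k =>
    dyadicCube_subset_closedDyadicCube hr k _ rfl
  have hside : Tendsto (fun k : ℕ => 2 * r / 2 ^ k) atTop (𝓝 0) :=
    tendsto_const_nhds.div_atTop (tendsto_pow_atTop_atTop_of_one_lt one_lt_two)
  have hcubes : Tendsto (fun k => closedDyadicCube c r k (dyadicIndex c r k x)) atTop
      ((cubeVitaliFamily n).filterAt x) := by
    refine (cubeVitaliFamily n).tendsto_filterAt_iff.2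
      ⟨.of_forall fun k => closedBall_mem_cubeVitaliFamily (by positivity) (hmem k), fun ε hε => ?_⟩
    filter_upwards [hside.eventually (eventually_le_nhds hε)] with k hk
    exact (closedDyadicCube_subset_closedBall (hmem k)).trans (closedBall_subset_closedBall hk)
  refine (hx.comp hcubes).congr fun k => ?_
  rw [Function.comp_apply, setAverage_eq_avgOn, avgOn_closedDyadicCube hr]

end Dyadic

def weightedVolume (w : Rn n → ℝ) : Measure (Rn n) :=
  volume.withDensity fun x => ENNReal.ofReal (w x)

theorem weightedVolume_le_of_avgOn_le {w : Rn n → ℝ} (hw0 : ∀ x, 0 ≤ w x) {s : Set (Rn n)}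
    (hs : MeasurableSet s) (hsvol : 0 < vol s) (hw : IntegrableOn w s) {t : ℝ}
    (ht : avgOn s w ≤ t) : weightedVolume w s ≤ ENNReal.ofReal t * volume s := by
  rw [weightedVolume, withDensity_apply _ hs,
    ← ofReal_integral_eq_lintegral_ofReal hw (.of_forall fun x => hw0 x),
    ← ENNReal.ofReal_toReal (ENNReal.toReal_pos_iff.1 hsvol).2.ne,
    ← ENNReal.ofReal_mul' ENNReal.toReal_nonneg]
  exact ENNReal.ofReal_le_ofReal ((avgOn_le_iff hsvol).1 ht)

section Stopping

variable (w : Rn n → ℝ) (c : Rn n) (r t : ℝ)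

def IsHeavy (k : ℕ) (m : Fin n → ℤ) : Prop :=
  t < avgOn (dyadicCube c r k m) w

/-- The part of the top dyadic cube whose coarsest heavy dyadic cube is `(k, m)`; the nonempty ones
are the maximal heavy cubes of the Calderón–Zygmund decomposition. -/
def stoppingSet (k : ℕ) (m : Fin n → ℤ) : Set (Rn n) :=
  {x | dyadicIndex c r 0 x = 0 ∧ dyadicIndex c r k x = m ∧ IsHeavy w c r t k m ∧
    ∀ j < k, ¬ IsHeavy w c r t j (dyadicIndex c r j x)}

variable {w c r t}

theorem pairwise_disjoint_stoppingSet :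
    Pairwise (Function.onFun Disjoint fun p : ℕ × (Fin n → ℤ) => stoppingSet w c r t p.1 p.2) := by
  rintro ⟨k, m⟩ ⟨k', m'⟩ hne
  refine Set.disjoint_left.2 fun x ⟨_, hm, hk, hmin⟩ ⟨_, hm', hk', hmin'⟩ => hne ?_
  obtain rfl : k = k' := by
    by_contra h
    rcases Nat.lt_or_gt_of_ne h with h | h
    · exact hmin' k h (hm ▸ hk)
    · exact hmin k' h (hm' ▸ hk')
  exact congrArg _ (hm.symm.trans hm')

theorem stoppingSet_eq_dyadicCube {k : ℕ} {m : Fin n → ℤ} {x : Rn n}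
    (hx : x ∈ stoppingSet w c r t k m) : stoppingSet w c r t k m = dyadicCube c r k m := by
  obtain ⟨h0, rfl, hheavy, hmin⟩ := hx
  refine Subset.antisymm (fun y hy => hy.2.1) fun y (hy : _ = _) => ⟨?_, hy, hheavy, ?_⟩
  · rw [dyadicIndex_eq_of_le (Nat.zero_le k) hy, h0]
  · intro j hj
    rw [dyadicIndex_eq_of_le hj.le hy]
    exact hmin j hj

theorem stoppingSet_subset_closedBall (hr : 0 < r) (k : ℕ) (m : Fin n → ℤ) :
    stoppingSet w c r t k m ⊆ closedBall c r :=
  fun _ hx => dyadicCube_zero_subset hr hx.1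

theorem measurableSet_stoppingSet (hr : 0 < r) (k : ℕ) (m : Fin n → ℤ) :
    MeasurableSet (stoppingSet w c r t k m) := by
  rcases (stoppingSet w c r t k m).eq_empty_or_nonempty with h | ⟨x, hx⟩
  · rw [h]
    exact .empty
  · rw [stoppingSet_eq_dyadicCube hx]
    exact measurableSet_dyadicCube hr k m

/-- A stopping cube is not the top cube, and its parent is light: this gives the factor `2 ^ n`. -/
theorem weightedVolume_stoppingSet_le (hr : 0 < r) (hw0 : ∀ x, 0 ≤ w x)
    (hwl : LocallyIntegrable w volume) (ht : avgOn (closedBall c r) w < t) (k : ℕ)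
    (m : Fin n → ℤ) :
    weightedVolume w (stoppingSet w c r t k m) ≤
      2 ^ n * ENNReal.ofReal t * volume (stoppingSet w c r t k m) := by
  rcases (stoppingSet w c r t k m).eq_empty_or_nonempty with h | ⟨x, hx⟩
  · simp [h]
  rw [stoppingSet_eq_dyadicCube hx]
  obtain ⟨h0, rfl, hheavy, hmin⟩ := hx
  cases k with
  | zero =>
    rw [IsHeavy, h0, ← avgOn_closedDyadicCube hr, closedDyadicCube_zero] at hheavy
    exact absurd hheavy ht.not_gt
  | succ j =>
    calc weightedVolume w (dyadicCube c r (j + 1) (dyadicIndex c r (j + 1) x))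
        ≤ weightedVolume w (dyadicCube c r j (dyadicIndex c r j x)) :=
          measure_mono (dyadicCube_dyadicIndex_subset j.le_succ x)
      _ ≤ ENNReal.ofReal t * volume (dyadicCube c r j (dyadicIndex c r j x)) :=
          weightedVolume_le_of_avgOn_le hw0 (measurableSet_dyadicCube hr j _)
            (vol_dyadicCube_pos hr j _) (integrableOn_dyadicCube hr hwl j _)
            (not_lt.1 (hmin j j.lt_succ_self))
      _ = _ := by rw [volume_dyadicCube_eq_two_pow_mul hr j _ (dyadicIndex c r (j + 1) x)]; ring

theorem mem_iUnion_stoppingSet {x : Rn n} (h0 : dyadicIndex c r 0 x = 0)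
    (hheavy : ∃ k, IsHeavy w c r t k (dyadicIndex c r k x)) :
    x ∈ ⋃ p : ℕ × (Fin n → ℤ), stoppingSet w c r t p.1 p.2 := by
  classical
  exact mem_iUnion.2 ⟨(Nat.find hheavy, _),
    h0, rfl, Nat.find_spec hheavy, fun j hj => Nat.find_min hheavy hj⟩

theorem ae_le_of_forall_not_isHeavy (hr : 0 < r) (hwl : LocallyIntegrable w volume) :
    ∀ᵐ x, (∀ k, ¬ IsHeavy w c r t k (dyadicIndex c r k x)) → w x ≤ t := by
  filter_upwards [ae_tendsto_avgOn_dyadicCube hr hwl] with x hx hlight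
  exact le_of_tendsto hx (.of_forall fun k => not_lt.1 (hlight k))

theorem lt_maximalFn_of_mem_stoppingSet (hr : 0 < r) (hw0 : ∀ x, 0 ≤ w x) {x : Rn n}
    (hB : BddAbove (cubeAverages ((closedBall c r).indicator w) x)) {k : ℕ} {m : Fin n → ℤ}
    (hx : x ∈ stoppingSet w c r t k m) :
    t < maximalFn ((closedBall c r).indicator w) x := by
  obtain ⟨h0, rfl, hheavy, -⟩ := hx
  have hcube := isCube_closedDyadicCube (c := c) hr k (dyadicIndex c r k x)
  calc t < avgOn (dyadicCube c r k (dyadicIndex c r k x)) w := hheavy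
    _ = avgOn (closedDyadicCube c r k (dyadicIndex c r k x))
          (fun y => |(closedBall c r).indicator w y|) := by
      rw [avgOn_abs_indicator hw0 hcube.measurableSet (closedDyadicCube_dyadicIndex_subset hr h0 k),
        avgOn_closedDyadicCube hr]
    _ ≤ _ := avgOn_le_maximalFn hB hcube (dyadicCube_subset_closedDyadicCube hr k _ rfl)

theorem weightedVolume_inter_lt_le (hr : 0 < r) (hw0 : ∀ x, 0 ≤ w x)
    (hwl : LocallyIntegrable w volume) (ht : avgOn (closedBall c r) w < t) :
    weightedVolume w (closedBall c r ∩ {x | t < w x}) ≤ 2 ^ n * ENNReal.ofReal t *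
      volume (closedBall c r ∩ {x | t < maximalFn ((closedBall c r).indicator w) x}) := by
  set S := fun p : ℕ × (Fin n → ℤ) => stoppingSet w c r t p.1 p.2
  have hS : ∀ p, MeasurableSet (S p) := fun p => measurableSet_stoppingSet hr p.1 p.2
  have hcover : (closedBall c r ∩ {x | t < w x} : Set (Rn n)) ≤ᵐ[volume] ⋃ p, S p := by
    filter_upwards [ae_le_of_forall_not_isHeavy hr hwl,
      (dyadicCube_ae_eq hr 0 0).mem_iff] with x hlight h0 ⟨hxQ, hxt⟩
    rw [closedDyadicCube_zero] at h0
    refine mem_iUnion_stoppingSet (h0.2 hxQ) ?_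
    by_contra! h
    exact (hlight h).not_gt hxt
  have hmax : ⋃ p, S p ≤ᵐ[volume]
      (closedBall c r ∩ {x | t < maximalFn ((closedBall c r).indicator w) x} : Set (Rn n)) := by
    have hcube : IsCube (closedBall c r) := ⟨c, r, hr, rfl⟩
    filter_upwards [ae_bddAbove_cubeAverages (hcube.integrable_indicator hwl)] with x hB hx
    obtain ⟨p, hp⟩ := mem_iUnion.1 hx
    exact ⟨stoppingSet_subset_closedBall hr p.1 p.2 hp,
      lt_maximalFn_of_mem_stoppingSet hr hw0 hB hp⟩
  calc weightedVolume w (closedBall c r ∩ {x | t < w x})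
      ≤ weightedVolume w (⋃ p, S p) :=
        measure_mono_ae ((withDensity_absolutelyContinuous _ _).ae_le hcover)
    _ = ∑' p, weightedVolume w (S p) := measure_iUnion pairwise_disjoint_stoppingSet hS
    _ ≤ ∑' p, 2 ^ n * ENNReal.ofReal t * volume (S p) :=
        ENNReal.tsum_le_tsum fun p => weightedVolume_stoppingSet_le hr hw0 hwl ht p.1 p.2
    _ = 2 ^ n * ENNReal.ofReal t * volume (⋃ p, S p) := by
        rw [ENNReal.tsum_mul_left, measure_iUnion pairwise_disjoint_stoppingSet hS]
    _ ≤ _ := mul_le_mul_right (measure_mono_ae hmax) _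

end Stopping

section LayerCake

variable {α : Type*} [MeasurableSpace α]

theorem intervalIntegral_indicator_Ioi {φ : ℝ → ℝ} {ℓ y : ℝ} (hℓ : 0 ≤ ℓ) (hy : 0 ≤ y) :
    ∫ u in 0..y, (Ioi ℓ).indicator φ u = ∫ u in Ioc ℓ y, φ u := by
  rw [intervalIntegral.integral_of_le hy, setIntegral_indicator measurableSet_Ioi, Ioc_inter_Ioi,
    max_eq_right hℓ]

/-- The layer-cake formula for the weight `φ` switched on above the height `ℓ`. -/
theorem lintegral_ofReal_setIntegral_Ioc (μ : Measure α) {f : α → ℝ} (hf0 : 0 ≤ᵐ[μ] f)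
    (hf : AEMeasurable f μ) {φ : ℝ → ℝ} {ℓ : ℝ} (hℓ : 0 ≤ ℓ) (hφ : ContinuousOn φ (Ici ℓ))
    (hφ0 : ∀ s ∈ Ioi ℓ, 0 ≤ φ s) :
    ∫⁻ x, ENNReal.ofReal (∫ u in Ioc ℓ (f x), φ u) ∂μ =
      ∫⁻ s in Ioi ℓ, μ {x | s < f x} * ENNReal.ofReal (φ s) := by
  have hint : ∀ t > 0, IntervalIntegrable ((Ioi ℓ).indicator φ) volume 0 t := fun t ht => by
    rw [intervalIntegrable_iff_integrableOn_Ioc_of_le ht.le, IntegrableOn,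
      integrable_indicator_iff measurableSet_Ioi, IntegrableOn, Measure.restrict_restrict
      measurableSet_Ioi, inter_comm, Ioc_inter_Ioi, max_eq_right hℓ]
    exact (hφ.mono Icc_subset_Ici_self).integrableOn_Icc.mono_set Ioc_subset_Icc_self
  calc ∫⁻ x, ENNReal.ofReal (∫ u in Ioc ℓ (f x), φ u) ∂μ
      = ∫⁻ x, ENNReal.ofReal (∫ u in 0..f x, (Ioi ℓ).indicator φ u) ∂μ :=
        lintegral_congr_ae (hf0.mono fun x hx =>
          congrArg ENNReal.ofReal (intervalIntegral_indicator_Ioi hℓ hx).symm)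
    _ = ∫⁻ s in Ioi 0, (Ioi ℓ).indicator (fun s => μ {x | s < f x} * ENNReal.ofReal (φ s)) s := by
        rw [lintegral_comp_eq_lintegral_meas_lt_mul μ hf0 hf hint
          (.of_forall fun s => indicator_nonneg hφ0 s)]
        refine lintegral_congr fun s => ?_
        by_cases hs : s ∈ Ioi ℓ <;> simp [hs]
    _ = ∫⁻ s in Ioi ℓ, μ {x | s < f x} * ENNReal.ofReal (φ s) := by
        rw [setLIntegral_indicator measurableSet_Ioi, Ioi_inter_Ioi, max_eq_left hℓ]

theorem ofReal_log_div_eq_setIntegral_inv {ℓ y : ℝ} (hℓ : 0 < ℓ) (hy : 0 ≤ y) :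
    ENNReal.ofReal (log (y / ℓ)) = ENNReal.ofReal (∫ u in Ioc ℓ y, u⁻¹) := by
  rcases le_or_gt ℓ y with hℓy | hyℓ
  · rw [← intervalIntegral.integral_of_le hℓy, integral_inv_of_pos hℓ (hℓ.trans_le hℓy)]
  · rw [Ioc_eq_empty (lt_asymm hyℓ), Measure.restrict_empty, integral_zero_measure,
      ENNReal.ofReal_of_nonpos (log_nonpos (by positivity) ((div_le_one hℓ).2 hyℓ.le)),
      ENNReal.ofReal_zero]

theorem ofReal_sub_eq_setIntegral_one (ℓ y : ℝ) :
    ENNReal.ofReal (y - ℓ) = ENNReal.ofReal (∫ _ in Ioc ℓ y, (1 : ℝ)) := by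
  simp [Real.volume_real_Ioc]

/-- Integrate the tail bound against `ds / s`. -/
theorem lintegral_ofReal_log_div_le {ν μ : Measure α} {f g : α → ℝ} {ℓ : ℝ} {C : ℝ≥0∞}
    (hℓ : 0 < ℓ) (hf0 : 0 ≤ᵐ[ν] f) (hf : AEMeasurable f ν) (hg0 : 0 ≤ᵐ[μ] g)
    (hg : AEMeasurable g μ)
    (h : ∀ s, ℓ < s → ν {x | s < f x} ≤ C * ENNReal.ofReal s * μ {x | s < g x}) :
    ∫⁻ x, ENNReal.ofReal (log (f x / ℓ)) ∂ν ≤ C * ∫⁻ x, ENNReal.ofReal (g x - ℓ) ∂μ := by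
  have htail : Measurable fun s => μ {x | s < g x} :=
    Antitone.measurable fun s s' hss' => measure_mono fun x (hx : s' < g x) => hss'.trans_lt hx
  calc ∫⁻ x, ENNReal.ofReal (log (f x / ℓ)) ∂ν
      = ∫⁻ x, ENNReal.ofReal (∫ u in Ioc ℓ (f x), u⁻¹) ∂ν :=
        lintegral_congr_ae (hf0.mono fun x hx => ofReal_log_div_eq_setIntegral_inv hℓ hx)
    _ = ∫⁻ s in Ioi ℓ, ν {x | s < f x} * ENNReal.ofReal s⁻¹ :=
        lintegral_ofReal_setIntegral_Ioc ν hf0 hf hℓ.le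
          (continuousOn_inv₀.mono fun s hs => (hℓ.trans_le hs).ne')
          fun s hs => inv_nonneg.2 (hℓ.trans hs).le
    _ ≤ ∫⁻ s in Ioi ℓ, C * μ {x | s < g x} := by
        refine setLIntegral_mono' measurableSet_Ioi fun s (hs : ℓ < s) => ?_
        calc ν {x | s < f x} * ENNReal.ofReal s⁻¹
            ≤ C * ENNReal.ofReal s * μ {x | s < g x} * ENNReal.ofReal s⁻¹ := by gcongr; exact h s hs
          _ = C * μ {x | s < g x} * ENNReal.ofReal (s * s⁻¹) := by
            rw [ENNReal.ofReal_mul (hℓ.trans hs).le]; ring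
          _ = C * μ {x | s < g x} := by
            rw [mul_inv_cancel₀ (hℓ.trans hs).ne', ENNReal.ofReal_one, mul_one]
    _ = C * ∫⁻ x, ENNReal.ofReal (g x - ℓ) ∂μ := by
        rw [lintegral_const_mul C htail]
        congr 1
        rw [lintegral_congr fun x => ofReal_sub_eq_setIntegral_one ℓ (g x),
          lintegral_ofReal_setIntegral_Ioc μ hg0 hg hℓ.le continuousOn_const fun _ _ => zero_le_one]
        simp

end LayerCake

section PerCube

variable {w : Rn n → ℝ} {Q : Set (Rn n)}

theorem setIntegral_maximalFn_sub_avgOn (hQ : IsCube Q)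
    (hM : IntegrableOn (maximalFn (Q.indicator w)) Q volume) :
    ∫ x in Q, (maximalFn (Q.indicator w) x - avgOn Q w) =
      (∫ x in Q, maximalFn (Q.indicator w) x) - intOn w Q := by
  rw [integral_sub hM (integrableOn_const hQ.volume_ne_top), setIntegral_const, smul_eq_mul,
    measureReal_def, ← vol, hQ.vol_mul_avgOn, intOn]

theorem lintegral_ofReal_log_mul_le (hQ : IsCube Q) (hw0 : ∀ x, 0 ≤ w x)
    (hwl : LocallyIntegrable w volume) (hpos : 0 < intOn w Q)
    (hM : IntegrableOn (maximalFn (Q.indicator w)) Q volume) :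
    ∫⁻ x in Q, ENNReal.ofReal (log (w x / avgOn Q w)) * ENNReal.ofReal (w x) ≤
      2 ^ n * ∫⁻ x in Q, ENNReal.ofReal (maximalFn (Q.indicator w) x - avgOn Q w) := by
  have hℓ : 0 < avgOn Q w := mul_pos (inv_pos.2 hQ.vol_pos) hpos
  have hw : AEMeasurable w (volume.restrict Q) :=
    (hwl.integrableOn_isCompact hQ.isCompact).aemeasurable
  have hν : (weightedVolume w).restrict Q =
      (volume.restrict Q).withDensity fun x => ENNReal.ofReal (w x) :=
    restrict_withDensity hQ.measurableSet _
  have hlog : AEMeasurable (fun x => ENNReal.ofReal (log (w x / avgOn Q w))) (volume.restrict Q) :=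
    (measurable_log.comp_aemeasurable (hw.div_const _)).ennreal_ofReal
  have hdens : ∫⁻ x, ENNReal.ofReal (log (w x / avgOn Q w)) ∂(weightedVolume w).restrict Q =
      ∫⁻ x in Q, ENNReal.ofReal (log (w x / avgOn Q w)) * ENNReal.ofReal (w x) := by
    rw [hν, lintegral_withDensity_eq_lintegral_mul₀ hw.ennreal_ofReal hlog]
    exact lintegral_congr fun x => mul_comm (ENNReal.ofReal (w x)) _
  rw [← hdens]
  refine lintegral_ofReal_log_div_le hℓ (.of_forall hw0)
    (hν ▸ hw.mono_ac (withDensity_absolutelyContinuous _ _))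
    (.of_forall (maximalFn_nonneg _)) hM.aemeasurable fun s hs => ?_
  rw [Measure.restrict_apply' hQ.measurableSet, Measure.restrict_apply' hQ.measurableSet,
    inter_comm, inter_comm _ Q]
  obtain ⟨c, r, hr, rfl⟩ := hQ
  exact weightedVolume_inter_lt_le hr hw0 hwl hs

theorem integral_one_add_log_mul_le (hQ : IsCube Q) (hw0 : ∀ x, 0 ≤ w x)
    (hwl : LocallyIntegrable w volume) (hpos : 0 < intOn w Q)
    (hM : IntegrableOn (maximalFn (Q.indicator w)) Q volume) :
    ∫ x in Q, (1 + max (log (w x / avgOn Q w)) 0) * w x ≤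
      intOn w Q + 2 ^ n * ((∫ x in Q, maximalFn (Q.indicator w) x) - intOn w Q) := by
  have hwQ := hwl.integrableOn_isCompact hQ.isCompact
  have hgap0 : 0 ≤ᵐ[volume.restrict Q] fun x => maximalFn (Q.indicator w) x - avgOn Q w :=
    (ae_avgOn_le_maximalFn_indicator hQ hw0 hwl).mono fun x hx => sub_nonneg.2 hx
  have hgapQ : IntegrableOn (fun x => maximalFn (Q.indicator w) x - avgOn Q w) Q :=
    hM.sub (integrableOn_const hQ.volume_ne_top)
  have hgap : ∫⁻ x in Q, ENNReal.ofReal (maximalFn (Q.indicator w) x - avgOn Q w) =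
      ENNReal.ofReal ((∫ x in Q, maximalFn (Q.indicator w) x) - intOn w Q) := by
    rw [← setIntegral_maximalFn_sub_avgOn hQ hM, ofReal_integral_eq_lintegral_ofReal hgapQ hgap0]
  have hgap_nonneg : 0 ≤ (∫ x in Q, maximalFn (Q.indicator w) x) - intOn w Q :=
    setIntegral_maximalFn_sub_avgOn hQ hM ▸ integral_nonneg_of_ae hgap0
  have hlog : AEMeasurable (fun x => max (log (w x / avgOn Q w)) 0) (volume.restrict Q) :=
    (measurable_log.comp_aemeasurable (hwQ.aemeasurable.div_const _)).max aemeasurable_const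
  rw [integral_eq_lintegral_of_nonneg_ae
    (f := fun x => (1 + max (log (w x / avgOn Q w)) 0) * w x)
    (.of_forall fun x => mul_nonneg (add_nonneg zero_le_one (le_max_right _ _)) (hw0 x))
    ((aemeasurable_const.add hlog).mul hwQ.aemeasurable).aestronglyMeasurable]
  refine ENNReal.toReal_le_of_le_ofReal (by positivity) ?_
  calc ∫⁻ x in Q, ENNReal.ofReal ((1 + max (log (w x / avgOn Q w)) 0) * w x)
      = ∫⁻ x in Q, (ENNReal.ofReal (w x) +
          ENNReal.ofReal (log (w x / avgOn Q w)) * ENNReal.ofReal (w x)) := by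
        refine lintegral_congr fun x => ?_
        rw [add_mul, one_mul, ENNReal.ofReal_add (hw0 x) (mul_nonneg (le_max_right _ _) (hw0 x)),
          ENNReal.ofReal_mul (le_max_right _ _)]
        simp
    _ = ENNReal.ofReal (intOn w Q) +
          ∫⁻ x in Q, ENNReal.ofReal (log (w x / avgOn Q w)) * ENNReal.ofReal (w x) := by
        rw [lintegral_add_left' hwQ.aemeasurable.ennreal_ofReal, intOn,
          ofReal_integral_eq_lintegral_ofReal hwQ (.of_forall hw0)]
    _ ≤ ENNReal.ofReal (intOn w Q) +
          2 ^ n * ENNReal.ofReal ((∫ x in Q, maximalFn (Q.indicator w) x) - intOn w Q) := by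
        rw [← hgap]
        gcongr
        exact lintegral_ofReal_log_mul_le hQ hw0 hwl hpos hM
    _ = _ := by
        rw [ENNReal.ofReal_add hpos.le (by positivity), ENNReal.ofReal_mul (by positivity),
          ENNReal.ofReal_pow zero_le_two, ENNReal.ofReal_ofNat]

end PerCube

end

/-- For `w ∈ A_∞`, the logarithmic `A_∞` constant satisfies
`[w]^{log}_{A∞} - 1 ≤ 2^n ([w]_{A∞} - 1)`. -/
theorem stmt10 {n : ℕ} (w : Rn n → ℝ) (hw0 : ∀ x, 0 ≤ w x)
    (hwl : LocallyIntegrable w volume)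
    (hpos : ∀ Q : Set (Rn n), IsCube Q → 0 < intOn w Q)
    (hM : ∀ Q : Set (Rn n), IsCube Q →
      IntegrableOn (maximalFn (Q.indicator w)) Q volume)
    (hfw : BddAbove (fwSet w)) :
    logAinf w - 1 ≤ (2 : ℝ) ^ n * (fujiiWilson w - 1) := by
  suffices logAinf w ≤ 1 + 2 ^ n * (fujiiWilson w - 1) by linarith
  refine csSup_le ⟨_, _, ⟨0, 1, one_pos, rfl⟩, rfl⟩ ?_
  rintro _ ⟨Q, hQ, rfl⟩
  have hwQ := hpos Q hQ
  calc (intOn w Q)⁻¹ * ∫ x in Q, (1 + max (log (w x / avgOn Q w)) 0) * w x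
      ≤ (intOn w Q)⁻¹ *
          (intOn w Q + 2 ^ n * ((∫ x in Q, maximalFn (Q.indicator w) x) - intOn w Q)) := by
        gcongr
        exact integral_one_add_log_mul_le hQ hw0 hwl hwQ (hM Q hQ)
    _ = 1 + 2 ^ n * ((intOn w Q)⁻¹ * (∫ x in Q, maximalFn (Q.indicator w) x) - 1) := by
        field_simp
    _ ≤ 1 + 2 ^ n * (fujiiWilson w - 1) := by
        gcongr
        exact le_csSup hfw ⟨Q, hQ, rfl⟩
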